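/- If X and Y are topological spaces that are Σ⁰_α-isomorphic for some countable ordinal α ≥ 1, and the Borel hierarchy in X does not collapse (Σ⁰_β(X) ≠ Π⁰_β(X) for all β < ω₁), then the Borel hierarchy in Y does not collapse. -/

import Mathlib

/-- The Borel hierarchy: `Σ⁰₀ = {∅}`, `Σ⁰₁` = open sets, `Σ⁰₂` = countable unions of
differences of open sets, and for `α > 2`, `Σ⁰_α` = countable unions of complements of
sets from lower levels. -/
noncomputable def SigmaO (X : Type*) [TopologicalSpace X] : Ordinal → Set (Set X) :=
  WellFounded.fix Ordinal.lt_wf fun α ih =>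
    if α = 0 then {(∅ : Set X)}
    else if α = 1 then {s | IsOpen s}
    else if α = 2 then
      {s | ∃ f g : ℕ → Set X, (∀ n, IsOpen (f n) ∧ IsOpen (g n)) ∧ s = ⋃ n, f n \ g n}
    else
      {s | ∃ (β : ℕ → Ordinal) (A : ℕ → Set X),
        (∀ n, ∃ h : β n < α, A n ∈ ih (β n) h) ∧ s = ⋃ n, (A n)ᶜ}

/-- The dual classes `Π⁰_α`. -/
noncomputable def PiO (X : Type*) [TopologicalSpace X] (α : Ordinal) : Set (Set X) :=
  {s | sᶜ ∈ SigmaO X α}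

/-!
A `Σ⁰_α`-function is a `Σ⁰_γ`-function for every `γ ≥ α`, so a collapse `Σ⁰_β(Y) = Π⁰_β(Y)`
propagates to the level `max α β` of `Y` and is pulled back by the bijection to the same level
of `X`, which is still countable. Collapse propagates upwards because a collapsed level `Σ⁰_γ`,
`γ ≥ 1`, is a σ-algebra containing the open sets, whereas every `Σ⁰_δ` set is Borel.
Countability of the levels is what lets them be moved between the universes of the ordinals
involved.
-/

open Set

theorem Ordinal.eq_zero_or_eq_one_or_eq_two_or_two_lt (α : Ordinal) :
    α = 0 ∨ α = 1 ∨ α = 2 ∨ 2 < α := by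
  rcases le_or_gt α 2 with h | h
  · have := Order.le_two_iff.mp h
    tauto
  · tauto

theorem Ordinal.exists_lift_eq_lift_of_lt_aleph_one_ord {a : Ordinal.{u}}
    (ha : a < (Cardinal.aleph 1).ord) :
    ∃ a' : Ordinal.{v}, Ordinal.lift.{u} a' = Ordinal.lift.{v} a ∧ a' < (Cardinal.aleph 1).ord := by
  have h : Ordinal.lift.{v} a < Ordinal.lift.{u} (Cardinal.aleph 1).ord := by
    simpa [Cardinal.lift_ord] using Ordinal.lift_lt.{v}.2 ha
  obtain ⟨a', ha', h⟩ := Ordinal.lt_lift_iff.1 h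
  exact ⟨a', h, ha'⟩

section

variable {X Y : Type*} [TopologicalSpace X] [TopologicalSpace Y]

theorem sigmaO_eq (α : Ordinal) :
    SigmaO X α =
      if α = 0 then {(∅ : Set X)}
      else if α = 1 then {s | IsOpen s}
      else if α = 2 then
        {s | ∃ f g : ℕ → Set X, (∀ n, IsOpen (f n) ∧ IsOpen (g n)) ∧ s = ⋃ n, f n \ g n}
      else
        {s | ∃ (β : ℕ → Ordinal) (A : ℕ → Set X),
          (∀ n, β n < α ∧ A n ∈ SigmaO X (β n)) ∧ s = ⋃ n, (A n)ᶜ} := by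
  rw [SigmaO, WellFounded.fix_eq]
  simp only [exists_prop]

theorem sigmaO_zero : SigmaO X 0 = {∅} := by
  simp [sigmaO_eq]

theorem sigmaO_one : SigmaO X 1 = {s | IsOpen s} := by
  simp [sigmaO_eq]

theorem sigmaO_two : SigmaO X 2 =
    {s | ∃ f g : ℕ → Set X, (∀ n, IsOpen (f n) ∧ IsOpen (g n)) ∧ s = ⋃ n, f n \ g n} := by
  simp [sigmaO_eq]

theorem sigmaO_of_two_lt {α : Ordinal} (h : 2 < α) : SigmaO X α =
    {s | ∃ (β : ℕ → Ordinal) (A : ℕ → Set X),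
      (∀ n, β n < α ∧ A n ∈ SigmaO X (β n)) ∧ s = ⋃ n, (A n)ᶜ} := by
  have h1 : 1 < α := one_lt_two.trans h
  rw [sigmaO_eq, if_neg (zero_lt_one.trans h1).ne', if_neg h1.ne', if_neg h.ne']

theorem iUnion_compl_mem_sigmaO {α : Ordinal} (h : 2 < α) {β : ℕ → Ordinal} {A : ℕ → Set X}
    (hβ : ∀ n, β n < α) (hA : ∀ n, A n ∈ SigmaO X (β n)) : (⋃ n, (A n)ᶜ) ∈ SigmaO X α := by
  rw [sigmaO_of_two_lt h]
  exact ⟨β, A, fun n => ⟨hβ n, hA n⟩, rfl⟩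

theorem compl_mem_sigmaO {α β : Ordinal} (h : 2 < α) (hβ : β < α) {s : Set X}
    (hs : s ∈ SigmaO X β) : sᶜ ∈ SigmaO X α := by
  simpa [iUnion_const] using iUnion_compl_mem_sigmaO h (fun _ => hβ) fun _ => hs

theorem isOpen_mem_sigmaO_two {s : Set X} (hs : IsOpen s) : s ∈ SigmaO X 2 := by
  rw [sigmaO_two]
  exact ⟨fun _ => s, fun _ => ∅, fun _ => ⟨hs, isOpen_empty⟩, by simp [iUnion_const]⟩

theorem isClosed_mem_sigmaO_two {s : Set X} (hs : IsClosed s) : s ∈ SigmaO X 2 := by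
  rw [sigmaO_two]
  exact ⟨fun _ => univ, fun _ => sᶜ, fun _ => ⟨isOpen_univ, hs.isOpen_compl⟩,
    by simp [iUnion_const]⟩

theorem empty_mem_sigmaO (α : Ordinal) : (∅ : Set X) ∈ SigmaO X α := by
  rcases α.eq_zero_or_eq_one_or_eq_two_or_two_lt with rfl | rfl | rfl | h
  · simp [sigmaO_zero]
  · simp [sigmaO_one]
  · exact isOpen_mem_sigmaO_two isOpen_empty
  · simpa using compl_mem_sigmaO h (one_lt_two.trans h) (by simp [sigmaO_one] : univ ∈ SigmaO X 1)

theorem iUnion_mem_sigmaO {α : Ordinal} (hα : 1 ≤ α) {A : ℕ → Set X}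
    (hA : ∀ n, A n ∈ SigmaO X α) : (⋃ n, A n) ∈ SigmaO X α := by
  rcases α.eq_zero_or_eq_one_or_eq_two_or_two_lt with rfl | rfl | rfl | h
  · simp at hα
  · simp only [sigmaO_one, mem_ofPred_eq] at hA ⊢
    exact isOpen_iUnion hA
  · simp only [sigmaO_two, mem_ofPred_eq] at hA ⊢
    choose F G hFG hA using hA
    refine ⟨fun n => F n.unpair.1 n.unpair.2, fun n => G n.unpair.1 n.unpair.2,
      fun n => hFG _ _, ?_⟩
    simp only [iUnion_congr hA, iUnion_unpair (fun i j => F i j \ G i j)]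
  · simp only [sigmaO_of_two_lt h, mem_ofPred_eq] at hA ⊢
    choose β B hB hA using hA
    refine ⟨fun n => β n.unpair.1 n.unpair.2, fun n => B n.unpair.1 n.unpair.2,
      fun n => hB _ _, ?_⟩
    simp only [iUnion_congr hA, iUnion_unpair (fun i j => (B i j)ᶜ)]

theorem union_mem_sigmaO {α : Ordinal} (hα : 1 ≤ α) {s t : Set X} (hs : s ∈ SigmaO X α)
    (ht : t ∈ SigmaO X α) : s ∪ t ∈ SigmaO X α := by
  have h := iUnion_mem_sigmaO hα (A := fun n => if n = 0 then s else t) fun n => by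
    split_ifs <;> assumption
  convert h using 1
  ext x
  simp only [mem_union, mem_iUnion]
  exact ⟨fun h => h.elim (fun hs => ⟨0, by simpa⟩) fun ht => ⟨1, by simpa⟩,
    fun ⟨n, hn⟩ => by split_ifs at hn <;> tauto⟩

theorem sigmaO_mono {β γ : Ordinal} (h : β ≤ γ) : SigmaO X β ⊆ SigmaO X γ := by
  rcases h.eq_or_lt with rfl | h
  · exact subset_rfl
  intro s hs
  rcases β.eq_zero_or_eq_one_or_eq_two_or_two_lt with rfl | rfl | rfl | hβ
  · rw [sigmaO_zero, mem_singleton_iff] at hs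
    exact hs ▸ empty_mem_sigmaO γ
  · rw [sigmaO_one] at hs
    rcases γ.eq_zero_or_eq_one_or_eq_two_or_two_lt with rfl | rfl | rfl | hγ
    · simp at h
    · simp at h
    · exact isOpen_mem_sigmaO_two hs
    · simpa using compl_mem_sigmaO hγ hγ (isClosed_mem_sigmaO_two hs.isClosed_compl)
  · rw [sigmaO_two] at hs
    obtain ⟨F, G, hFG, rfl⟩ := hs
    have hFG' : ∀ n, (F n)ᶜ ∪ G n ∈ SigmaO X 2 := fun n =>
      union_mem_sigmaO one_le_two (isClosed_mem_sigmaO_two (hFG n).1.isClosed_compl)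
        (isOpen_mem_sigmaO_two (hFG n).2)
    simpa [sdiff_eq] using iUnion_compl_mem_sigmaO h (fun _ => h) hFG'
  · rw [sigmaO_of_two_lt hβ] at hs
    obtain ⟨δ, A, hA, rfl⟩ := hs
    exact iUnion_compl_mem_sigmaO (hβ.trans h) (fun n => (hA n).1.trans h) fun n => (hA n).2

theorem measurableSet_of_mem_sigmaO [MeasurableSpace X] [OpensMeasurableSpace X] {α : Ordinal}
    {s : Set X} (hs : s ∈ SigmaO X α) : MeasurableSet s := by
  induction α using WellFoundedLT.induction generalizing s with | _ α ih =>
  rcases α.eq_zero_or_eq_one_or_eq_two_or_two_lt with rfl | rfl | rfl | h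
  · rw [sigmaO_zero, mem_singleton_iff] at hs
    exact hs ▸ .empty
  · rw [sigmaO_one] at hs
    exact hs.measurableSet
  · rw [sigmaO_two] at hs
    obtain ⟨F, G, hFG, rfl⟩ := hs
    exact .iUnion fun n => (hFG n).1.measurableSet.diff (hFG n).2.measurableSet
  · rw [sigmaO_of_two_lt h] at hs
    obtain ⟨β, A, hA, rfl⟩ := hs
    exact .iUnion fun n => (ih _ (hA n).1 (hA n).2).compl

theorem sigmaO_eq_piO_congr {α : Ordinal.{u}} {β : Ordinal.{v}} (h : SigmaO X α = SigmaO X β) :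
    SigmaO X α = PiO X α ↔ SigmaO X β = PiO X β := by
  simp only [PiO, h]

theorem sigmaO_subset_of_sigmaO_eq_piO {γ : Ordinal} (hγ : 1 ≤ γ)
    (hcol : SigmaO X γ = PiO X γ) (δ : Ordinal) : SigmaO X δ ⊆ SigmaO X γ := by
  let : MeasurableSpace X :=
    { MeasurableSet' := (· ∈ SigmaO X γ)
      measurableSet_empty := empty_mem_sigmaO γ
      measurableSet_compl := fun s hs => by rwa [hcol] at hs
      measurableSet_iUnion := fun _ hA => iUnion_mem_sigmaO hγ hA }
  have : OpensMeasurableSpace X :=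
    ⟨MeasurableSpace.generateFrom_le fun s hs => sigmaO_mono hγ (by rwa [sigmaO_one])⟩
  exact fun s hs => measurableSet_of_mem_sigmaO hs

theorem sigmaO_eq_piO_of_le {γ δ : Ordinal} (hcol : SigmaO X γ = PiO X γ) (h : γ ≤ δ) :
    SigmaO X δ = PiO X δ := by
  rcases eq_or_ne γ 0 with rfl | hγ
  · have : IsEmpty X := by
      have huniv : (univ : Set X) ∈ PiO X 0 := by simp [PiO, sigmaO_zero]
      rw [← hcol, sigmaO_zero, mem_singleton_iff, univ_eq_empty_iff] at huniv
      exact huniv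
    ext s
    change s ∈ SigmaO X δ ↔ sᶜ ∈ SigmaO X δ
    rw [Subsingleton.elim sᶜ s]
  · have hγ1 : 1 ≤ γ := Order.one_le_iff_ne_zero.2 hγ
    have heq : SigmaO X δ = SigmaO X γ :=
      (sigmaO_subset_of_sigmaO_eq_piO hγ1 hcol δ).antisymm (sigmaO_mono h)
    exact (sigmaO_eq_piO_congr heq).2 hcol

def SigmaOMeasurable (α : Ordinal) (g : X → Y) : Prop :=
  ∀ A ∈ SigmaO Y α, g ⁻¹' A ∈ SigmaO X α

theorem SigmaOMeasurable.mono {α γ : Ordinal} {g : X → Y} (hα : 1 ≤ α)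
    (hg : SigmaOMeasurable α g) (h : α ≤ γ) : SigmaOMeasurable γ g := by
  induction γ using WellFoundedLT.induction with | _ γ ih =>
  rcases h.eq_or_lt with rfl | hlt
  · exact hg
  intro A hA
  rcases γ.eq_zero_or_eq_one_or_eq_two_or_two_lt with rfl | rfl | rfl | hγ
  · simp at hlt
  · exact absurd hlt hα.not_gt
  · obtain rfl : α = 1 := le_antisymm (Order.lt_two_iff.mp hlt) hα
    have hcont : Continuous g := continuous_def.2 fun s hs => by
      simpa [sigmaO_one] using hg s (by simpa [sigmaO_one])
    rw [sigmaO_two] at hA ⊢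
    obtain ⟨F, G, hFG, rfl⟩ := hA
    exact ⟨_, _, fun n => ⟨(hFG n).1.preimage hcont, (hFG n).2.preimage hcont⟩,
      by simp [preimage_iUnion]⟩
  · rw [sigmaO_of_two_lt hγ] at hA
    obtain ⟨β, B, hB, rfl⟩ := hA
    have hβα : ∀ n, max (β n) α < γ := fun n => max_lt (hB n).1 hlt
    simpa only [preimage_iUnion, preimage_compl] using iUnion_compl_mem_sigmaO hγ hβα
      fun n => ih _ (hβα n) (le_max_right _ _) _ (sigmaO_mono (le_max_left _ _) (hB n).2)

theorem sigmaO_eq_piO_of_equiv {α : Ordinal} (e : X ≃ Y) (he : SigmaOMeasurable α e)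
    (he' : SigmaOMeasurable α e.symm) (h : SigmaO Y α = PiO Y α) : SigmaO X α = PiO X α := by
  have key (s : Set X) : s ∈ SigmaO X α ↔ e.symm ⁻¹' s ∈ SigmaO Y α :=
    ⟨he' s, fun hs => by simpa using he _ hs⟩
  ext s
  change s ∈ SigmaO X α ↔ sᶜ ∈ SigmaO X α
  rw [key, key, preimage_compl]
  exact Set.ext_iff.mp h _

theorem sigmaO_lift (α : Ordinal.{u}) : SigmaO X (Ordinal.lift.{v} α) = SigmaO X α := by
  induction α using WellFoundedLT.induction with | _ α ih =>
  rcases α.eq_zero_or_eq_one_or_eq_two_or_two_lt with rfl | rfl | rfl | h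
  · rw [Ordinal.lift_zero, sigmaO_zero, sigmaO_zero]
  · rw [Ordinal.lift_one, sigmaO_one, sigmaO_one]
  · rw [Ordinal.lift_ofNat, sigmaO_two, sigmaO_two]
  have h' : 2 < Ordinal.lift.{v} α := by simpa using Ordinal.lift_lt.{v}.2 h
  ext s
  rw [sigmaO_of_two_lt h, sigmaO_of_two_lt h']
  constructor
  · rintro ⟨β, A, hA, rfl⟩
    choose β' hβ' hβ'eq using fun n => Ordinal.lt_lift_iff.1 (hA n).1
    exact ⟨β', A, fun n => ⟨hβ' n, by rw [← ih _ (hβ' n), hβ'eq]; exact (hA n).2⟩, rfl⟩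
  · rintro ⟨β, A, hA, rfl⟩
    exact ⟨fun n => Ordinal.lift (β n), A,
      fun n => ⟨Ordinal.lift_lt.2 (hA n).1, by rw [ih _ (hA n).1]; exact (hA n).2⟩, rfl⟩

theorem sigmaO_eq_of_lift_eq {α : Ordinal.{u}} {β : Ordinal.{v}}
    (h : Ordinal.lift.{v} α = Ordinal.lift.{u} β) : SigmaO X α = SigmaO X β :=
  calc SigmaO X α = SigmaO X (Ordinal.lift.{v} α) := (sigmaO_lift α).symm
    _ = SigmaO X β := by rw [h, sigmaO_lift]

theorem sigmaOMeasurable_congr {α : Ordinal.{u}} {β : Ordinal.{v}} {g : X → Y}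
    (h : Ordinal.lift.{v} α = Ordinal.lift.{u} β) :
    SigmaOMeasurable α g ↔ SigmaOMeasurable β g := by
  simp only [SigmaOMeasurable, sigmaO_eq_of_lift_eq h]

theorem exists_sigmaO_eq_piO_of_sigmaO_iso {α : Ordinal.{u}} (hα1 : 1 ≤ α)
    (hα : α < (Cardinal.aleph 1).ord) (f : X ≃ Y) (hf : SigmaOMeasurable α f)
    (hf' : SigmaOMeasurable α f.symm) {β : Ordinal.{v}} (hβ : β < (Cardinal.aleph 1).ord)
    (hY : SigmaO Y β = PiO Y β) :
    ∃ δ : Ordinal.{w}, δ < (Cardinal.aleph 1).ord ∧ SigmaO X δ = PiO X δ := by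
  obtain ⟨α', hα'eq, hα'lt⟩ := Ordinal.exists_lift_eq_lift_of_lt_aleph_one_ord.{u, v} hα
  have hα'1 : 1 ≤ α' := Ordinal.lift_le.1 <| by
    rw [hα'eq, Ordinal.lift_one, ← Ordinal.lift_one.{u}]
    exact Ordinal.lift_le.2 hα1
  have hle : α' ≤ max α' β := le_max_left _ _
  have hX : SigmaO X (max α' β) = PiO X (max α' β) :=
    sigmaO_eq_piO_of_equiv f (((sigmaOMeasurable_congr hα'eq).2 hf).mono hα'1 hle)
      (((sigmaOMeasurable_congr hα'eq).2 hf').mono hα'1 hle)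
      (sigmaO_eq_piO_of_le hY (le_max_right _ _))
  obtain ⟨δ, hδeq, hδlt⟩ :=
    Ordinal.exists_lift_eq_lift_of_lt_aleph_one_ord.{v, w} (max_lt hα'lt hβ)
  exact ⟨δ, hδlt, (sigmaO_eq_piO_congr (sigmaO_eq_of_lift_eq hδeq)).2 hX⟩

end

/-- If `X` and `Y` are `Σ⁰_α`-isomorphic (for a countable ordinal `α ≥ 1`) and the Borel
hierarchy in `X` does not collapse, then the Borel hierarchy in `Y` does not collapse. -/
theorem borel_noncollapse_of_sigma_iso {X Y : Type*} [TopologicalSpace X] [TopologicalSpace Y]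
    (α : Ordinal) (hα1 : 1 ≤ α) (hα : α < (Cardinal.aleph 1).ord)
    (f : X ≃ Y)
    (hf : ∀ A ∈ SigmaO Y α, f ⁻¹' A ∈ SigmaO X α)
    (hf' : ∀ A ∈ SigmaO X α, f.symm ⁻¹' A ∈ SigmaO Y α)
    (hX : ∀ β : Ordinal, β < (Cardinal.aleph 1).ord → SigmaO X β ≠ PiO X β) :
    ∀ β : Ordinal, β < (Cardinal.aleph 1).ord → SigmaO Y β ≠ PiO Y β := fun _ hβ hY =>
  let ⟨δ, hδ, hXδ⟩ := exists_sigmaO_eq_piO_of_sigmaO_iso hα1 hα f hf hf' hβ hY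
  hX δ hδ hXδ
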